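/- Let M ≥ 1, K ≥ 1, and for k = 1, …, K let c^{(k)} ∈ ℂ^M and v_k(f) = Σ_{i=0}^{M−1} c^{(k)}_i·exp(2πi·f·i). Define S(f) = sqrt( Σ_{k=1}^K |v_k(f)|² ). If N is a positive integer with N > 2πMK, then max_{j ∈ {0,1,…,N−1}} S(j/N) ≤ sup_{f ∈ [0,1)} S(f) ≤ (1 − 2πMK/N)^{−1/2} · max_{j ∈ {0,1,…,N−1}} S(j/N). -/

import Mathlib

/-!
Put `V(f) = (v_k(f))_k`, a trigonometric polynomial with coefficients in `ℂ^K`, so that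
`S = ‖V‖`. Convolution with the kernel `2πi·e(Mt)·|Σ_{j<M} e(jt)|²`, whose Fourier
coefficient at each frequency `i < M` is `2πi·i` and whose L¹ norm is `2πM`, differentiates
`V`; this gives Bernstein's inequality `‖V'‖ ≤ 2πM·B` with `B = sup S`, so `S` is
`2πMB`-Lipschitz. A maximum point of the periodic function `S` lies within `1/(2N)` of the
grid, hence `B ≤ max_j S(j/N) + πMB/N`, and `1 - πMK/N ≥ √(1 - 2πMK/N)` finishes.
-/

open Complex
open scoped Real ComplexConjugate
open Finset intervalIntegral

noncomputable section

theorem integral_exp_two_pi_I_mul_int (n : ℤ) :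
    ∫ t in (0 : ℝ)..1, exp (2 * π * I * t * n) = if n = 0 then 1 else 0 := by
  split_ifs with hn
  · simp [hn]
  have hc : 2 * π * I * n ≠ 0 := by simp [Real.pi_ne_zero, I_ne_zero, hn]
  have hexp : exp (2 * π * I * n) = 1 := by
    rw [← exp_int_mul_two_pi_mul_I n]; ring_nf
  simp_rw [show ∀ t : ℝ, 2 * π * I * t * n = 2 * π * I * n * t from fun t => by ring]
  rw [integral_exp_mul_complex hc]
  simp [hexp]

theorem integral_exp_mul_exp_neg (m n : ℕ) :
    ∫ t in (0 : ℝ)..1, exp (2 * π * I * t * m) * exp (-(2 * π * I * t * n))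
      = if m = n then 1 else 0 := by
  simp_rw [← exp_add, show ∀ t : ℝ, 2 * π * I * t * m + -(2 * π * I * t * n)
    = 2 * π * I * t * ((m - n : ℤ) : ℂ) from fun t => by push_cast; ring]
  simp only [integral_exp_two_pi_I_mul_int, sub_eq_zero, Nat.cast_inj]

theorem sum_range_sum_range_boole_add_eq {M i : ℕ} (hi : i ≤ M) :
    ∑ j ∈ range M, ∑ l ∈ range M, (if M + j = l + i then 1 else 0) = i := by
  have inner (j : ℕ) :
      ∑ l ∈ range M, (if M + j = l + i then 1 else 0) = if j < i then 1 else 0 := by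
    simp_rw [show ∀ l, (M + j = l + i ↔ M + j - i = l) from fun l => by omega]
    simp only [sum_ite_eq, mem_range, show M + j - i < M ↔ j < i by omega]
  simp_rw [inner, sum_boole]
  rw [show (range M).filter (· < i) = range i by ext; simp; omega, card_range, Nat.cast_id]

theorem integral_sum_sum_exp_mul_exp_neg (s s' : Finset ℕ) (f g : ℕ → ℕ) :
    ∫ t in (0 : ℝ)..1,
        ∑ j ∈ s, ∑ l ∈ s', exp (2 * π * I * t * f j) * exp (-(2 * π * I * t * g l))
      = ∑ j ∈ s, ∑ l ∈ s', if f j = g l then 1 else 0 := by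
  rw [integral_finsetSum fun j _ =>
    (continuous_finsetSum _ fun l _ => by fun_prop).intervalIntegrable _ _]
  refine sum_congr rfl fun j _ => ?_
  rw [integral_finsetSum fun l _ => (by fun_prop : Continuous _).intervalIntegrable _ _]
  exact sum_congr rfl fun l _ => integral_exp_mul_exp_neg _ _

def dirichletSum (M : ℕ) (t : ℝ) : ℂ := ∑ j ∈ range M, exp (2 * π * I * t * j)

theorem conj_exp_two_pi_I_mul_natCast (t : ℝ) (n : ℕ) :
    conj (exp (2 * π * I * t * n)) = exp (-(2 * π * I * t * n)) := by
  rw [← exp_conj]; simp [map_ofNat]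

theorem dirichletSum_mul_conj (M : ℕ) (t : ℝ) :
    dirichletSum M t * conj (dirichletSum M t) = ∑ j ∈ range M, ∑ l ∈ range M,
      exp (2 * π * I * t * j) * exp (-(2 * π * I * t * l)) := by
  simp only [dirichletSum, map_sum, conj_exp_two_pi_I_mul_natCast, sum_mul_sum]

theorem integral_norm_dirichletSum_sq (M : ℕ) :
    ∫ t in (0 : ℝ)..1, ‖dirichletSum M t‖ ^ 2 = M := by
  have h : ∫ t in (0 : ℝ)..1, ((‖dirichletSum M t‖ ^ 2 : ℝ) : ℂ) = M := by
    simp_rw [ofReal_pow, ← mul_conj', dirichletSum_mul_conj]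
    simpa [filter_true_of_mem fun _ => mem_range.mp] using
      integral_sum_sum_exp_mul_exp_neg (range M) (range M) id id
  exact_mod_cast intervalIntegral.integral_ofReal ▸ h

def bernsteinKernel (M : ℕ) (t : ℝ) : ℂ :=
  2 * π * I * exp (2 * π * I * t * M) * (dirichletSum M t * conj (dirichletSum M t))

theorem norm_bernsteinKernel (M : ℕ) (t : ℝ) :
    ‖bernsteinKernel M t‖ = 2 * π * ‖dirichletSum M t‖ ^ 2 := by
  simp [bernsteinKernel, mul_conj', norm_exp, abs_of_pos Real.pi_pos]

theorem integral_bernsteinKernel_mul_exp_neg {M i : ℕ} (hi : i ≤ M) :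
    ∫ t in (0 : ℝ)..1, bernsteinKernel M t * exp (-(2 * π * I * t * i)) = 2 * π * I * i := by
  have expand (t : ℝ) : bernsteinKernel M t * exp (-(2 * π * I * t * i)) = 2 * π * I *
      ∑ j ∈ range M, ∑ l ∈ range M,
        exp (2 * π * I * t * (M + j : ℕ)) * exp (-(2 * π * I * t * (l + i : ℕ))) := by
    simp only [bernsteinKernel, dirichletSum_mul_conj, mul_sum, sum_mul]
    refine sum_congr rfl fun j _ => sum_congr rfl fun l _ => ?_
    rw [mul_assoc, mul_assoc]
    congr 1
    simp only [← exp_add]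
    congr 1
    push_cast
    ring
  simp_rw [expand]
  have count :
      ∑ j ∈ range M, ∑ l ∈ range M, (if M + j = l + i then 1 else 0 : ℂ) = i := by
    exact_mod_cast sum_range_sum_range_boole_add_eq hi
  rw [integral_const_mul, integral_sum_sum_exp_mul_exp_neg (range M) (range M) (M + ·) (· + i),
    count]

theorem continuous_bernsteinKernel (M : ℕ) : Continuous (bernsteinKernel M) := by
  unfold bernsteinKernel dirichletSum
  fun_prop

section TrigPoly

variable {E : Type*} [NormedAddCommGroup E] [NormedSpace ℂ E] {M : ℕ}

def trigPoly (a : Fin M → E) (x : ℝ) : E := ∑ i : Fin M, exp (2 * π * I * x * i) • a i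

theorem hasDerivAt_trigPoly (a : Fin M → E) (x : ℝ) :
    HasDerivAt (trigPoly a)
      (∑ i : Fin M, (2 * π * I * i * exp (2 * π * I * x * i)) • a i) x := by
  refine HasDerivAt.fun_sum fun i _ => HasDerivAt.smul_const ?_ (a i)
  have h : HasDerivAt (fun y : ℝ => 2 * π * I * y * i) (2 * π * I * i) x := by
    simpa using ((hasDerivAt_id x).ofReal_comp.const_mul (2 * π * I)).mul_const (i : ℂ)
  simpa [mul_comm] using h.cexp

theorem continuous_trigPoly (a : Fin M → E) : Continuous (trigPoly a) :=
  continuous_iff_continuousAt.2 fun x => (hasDerivAt_trigPoly a x).continuousAt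

theorem trigPoly_periodic (a : Fin M → E) : Function.Periodic (trigPoly a) 1 := by
  intro x
  refine sum_congr rfl fun i _ => ?_
  rw [show 2 * π * I * ((x + 1 : ℝ) : ℂ) * i = 2 * π * I * x * i + i * (2 * π * I) by
    push_cast; ring, exp_add, exp_nat_mul_two_pi_mul_I, mul_one]

theorem deriv_trigPoly_eq_integral [CompleteSpace E] (a : Fin M → E) (x : ℝ) :
    deriv (trigPoly a) x = ∫ t in (0 : ℝ)..1, bernsteinKernel M t • trigPoly a (x - t) := by
  have coeff (i : Fin M) :
      ∫ t in (0 : ℝ)..1, bernsteinKernel M t * exp (2 * π * I * (x - t : ℝ) * i)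
        = 2 * π * I * i * exp (2 * π * I * x * i) := by
    simp_rw [show ∀ t : ℝ, bernsteinKernel M t * exp (2 * π * I * (x - t : ℝ) * i)
        = exp (2 * π * I * x * i) * (bernsteinKernel M t * exp (-(2 * π * I * t * i))) by
      intro t; rw [mul_left_comm, ← exp_add]; push_cast; ring_nf]
    rw [integral_const_mul, integral_bernsteinKernel_mul_exp_neg i.is_lt.le, mul_comm]
  rw [(hasDerivAt_trigPoly a x).deriv]
  simp only [trigPoly, smul_sum, smul_smul]
  have cont (i : Fin M) : Continuous fun t : ℝ =>
      (bernsteinKernel M t * exp (2 * π * I * (x - t : ℝ) * i)) • a i :=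
    ((continuous_bernsteinKernel M).mul (by fun_prop)).smul continuous_const
  rw [integral_finsetSum fun i _ => (cont i).intervalIntegrable 0 1]
  simp_rw [intervalIntegral.integral_smul_const, coeff]

theorem norm_deriv_trigPoly_le [CompleteSpace E] {a : Fin M → E} {C : ℝ}
    (hC : ∀ y, ‖trigPoly a y‖ ≤ C) (x : ℝ) :
    ‖deriv (trigPoly a) x‖ ≤ 2 * π * M * C := by
  have cont : Continuous fun t => ‖bernsteinKernel M t‖ * C :=
    (continuous_bernsteinKernel M).norm.mul continuous_const
  calc ‖deriv (trigPoly a) x‖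
      ≤ ∫ t in (0 : ℝ)..1, ‖bernsteinKernel M t‖ * C := by
        rw [deriv_trigPoly_eq_integral]
        refine norm_integral_le_of_norm_le zero_le_one (.of_forall fun t _ => ?_)
          (cont.intervalIntegrable 0 1)
        rw [norm_smul]
        exact mul_le_mul_of_nonneg_left (hC _) (norm_nonneg _)
    _ = 2 * π * M * C := by
        simp_rw [norm_bernsteinKernel]
        rw [intervalIntegral.integral_mul_const, intervalIntegral.integral_const_mul,
          integral_norm_dirichletSum_sq]

theorem norm_trigPoly_sub_le [CompleteSpace E] {a : Fin M → E} {C : ℝ}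
    (hC : ∀ y, ‖trigPoly a y‖ ≤ C) (x y : ℝ) :
    ‖trigPoly a y - trigPoly a x‖ ≤ 2 * π * M * C * |y - x| :=
  convex_univ.norm_image_sub_le_of_norm_deriv_le
    (fun z _ => (hasDerivAt_trigPoly a z).differentiableAt)
    (fun z _ => norm_deriv_trigPoly_le hC z) (Set.mem_univ x) (Set.mem_univ y)

end TrigPoly

namespace Function.Periodic

section

variable {α : Type*} {g : ℝ → α}

theorem image_Ico (hg : Periodic g 1) : g '' Set.Ico 0 1 = Set.range g :=
  (Set.image_subset_range _ _).antisymm <| Set.range_subset_iff.2 fun x =>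
    let ⟨y, hy, hyx⟩ := hg.exists_mem_Ico zero_lt_one x 0
    ⟨y, by simpa using hy, hyx.symm⟩

theorem exists_apply_int_div_eq (hg : Periodic g 1) {N : ℕ} (hN : 0 < N) (m : ℤ) :
    ∃ j : Fin N, g (m / N) = g (j / N) := by
  have hr : 0 ≤ m % N := Int.emod_nonneg m (by omega)
  have hr' : m % N < N := Int.emod_lt_of_pos m (by omega)
  refine ⟨⟨(m % N).toNat, by omega⟩, ?_⟩
  have hcast : (((m % N).toNat : ℕ) : ℝ) = ((m % N : ℤ) : ℝ) := by
    exact_mod_cast Int.toNat_of_nonneg hr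
  have hdecomp : (m : ℝ) = ((m % N : ℤ) : ℝ) + N * (m / N : ℤ) := by
    exact_mod_cast (Int.emod_add_mul_ediv m N).symm
  have hm : (m : ℝ) / N = ((m % N).toNat : ℕ) / N + (m / N : ℤ) * 1 := by
    rw [hcast, hdecomp]
    field_simp
  rw [hm, hg.int_mul]

end

variable {g : ℝ → ℝ}

theorem le_sSup_image_Ico (hg : Periodic g 1) (hcont : Continuous g) (x : ℝ) :
    g x ≤ sSup (g '' Set.Ico 0 1) :=
  hg.image_Ico ▸
    le_csSup (hg.isBounded_of_continuous one_ne_zero hcont).bddAbove (Set.mem_range_self x)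

theorem iSup_le_sSup_image_Ico (hg : Periodic g 1) (hcont : Continuous g) {N : ℕ} (hN : 0 < N) :
    ⨆ j : Fin N, g (j / N) ≤ sSup (g '' Set.Ico 0 1) :=
  have : Nonempty (Fin N) := ⟨⟨0, hN⟩⟩
  ciSup_le fun _ => hg.le_sSup_image_Ico hcont _

theorem sSup_image_Ico_le_iSup_add (hg : Periodic g 1) (hcont : Continuous g) {L : ℝ}
    (hL : ∀ x y, |g y - g x| ≤ L * |y - x|) {N : ℕ} (hN : 0 < N) :
    sSup (g '' Set.Ico 0 1) ≤ (⨆ j : Fin N, g (j / N)) + L / (2 * N) := by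
  have hL0 : 0 ≤ L := by simpa using (abs_nonneg _).trans (hL 0 1)
  have hNR : (0 : ℝ) < N := by exact_mod_cast hN
  obtain ⟨x₀, hx₀⟩ : sSup (Set.range g) ∈ Set.range g :=
    (hg.compact_of_continuous one_ne_zero hcont).sSup_mem (Set.range_nonempty g)
  set m := round ((N : ℝ) * x₀)
  obtain ⟨j, hj⟩ := hg.exists_apply_int_div_eq hN m
  have hdist : |x₀ - m / N| ≤ 1 / (2 * N) := by
    rw [show x₀ - m / N = (N * x₀ - m) / N by field_simp, abs_div, abs_of_pos hNR,
      div_le_iff₀ hNR, show 1 / (2 * N) * (N : ℝ) = 1 / 2 by field_simp]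
    exact abs_sub_round _
  rw [hg.image_Ico, ← hx₀]
  calc g x₀ ≤ g (m / N) + L * |x₀ - m / N| := by linarith [abs_le.1 (hL (m / N) x₀)]
    _ ≤ (⨆ j : Fin N, g (j / N)) + L * (1 / (2 * N)) := by
      rw [hj]
      gcongr
      exact le_ciSup (Set.finite_range fun j : Fin N => g (j / N)).bddAbove j
    _ = (⨆ j : Fin N, g (j / N)) + L / (2 * N) := by ring

end Function.Periodic

theorem le_one_sub_rpow_neg_half_mul {a B G : ℝ} (ha : a < 1) (hB : 0 ≤ B)
    (h : B ≤ G + B * a / 2) : B ≤ (1 - a) ^ (-(1 : ℝ) / 2) * G := by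
  have hsqrt : √(1 - a) ≤ 1 - a / 2 :=
    Real.sqrt_le_iff.2 ⟨by linarith, by nlinarith [sq_nonneg a]⟩
  have hpos : 0 < √(1 - a) := Real.sqrt_pos.2 (by linarith)
  rw [neg_div, Real.rpow_neg (by linarith), ← Real.sqrt_eq_rpow, inv_mul_eq_div,
    le_div_iff₀ hpos]
  nlinarith [mul_le_mul_of_nonneg_left hsqrt hB]

end

theorem stmt_13_general (M K : ℕ) (hK : 1 ≤ K) (c : Fin K → Fin M → ℂ)
    (v : Fin K → ℝ → ℂ)
    (hv : ∀ k (f : ℝ),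
      v k f = ∑ i : Fin M, c k i * Complex.exp (2 * Real.pi * Complex.I * f * i))
    (S : ℝ → ℝ) (hS : ∀ f, S f = Real.sqrt (∑ k, ‖v k f‖ ^ 2))
    (N : ℕ) (hN : 2 * Real.pi * M * K < N) :
    (⨆ j : Fin N, S ((j : ℝ) / N)) ≤ sSup (S '' Set.Ico (0 : ℝ) 1) ∧
    sSup (S '' Set.Ico (0 : ℝ) 1)
      ≤ (1 - 2 * Real.pi * M * K / N) ^ (-(1 : ℝ) / 2) * ⨆ j : Fin N, S ((j : ℝ) / N) := by
  have hN0 : 0 < N := by exact_mod_cast (by positivity : (0 : ℝ) ≤ 2 * π * M * K).trans_lt hN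
  set V := trigPoly fun i => WithLp.toLp 2 fun k => c k i
  obtain rfl : S = fun f => ‖V f‖ := by
    funext f
    rw [hS, EuclideanSpace.norm_eq]
    simp [V, trigPoly, hv, mul_comm]
  have hper : Function.Periodic (fun f => ‖V f‖) 1 :=
    fun f => congrArg _ (trigPoly_periodic _ f)
  have hcont : Continuous fun f => ‖V f‖ := (continuous_trigPoly _).norm
  set B := sSup ((fun f => ‖V f‖) '' Set.Ico 0 1)
  have hVB (y : ℝ) : ‖V y‖ ≤ B := hper.le_sSup_image_Ico hcont y
  have hB0 : 0 ≤ B := (norm_nonneg _).trans (hVB 0)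
  have hsample := hper.sSup_image_Ico_le_iSup_add hcont
    (fun x y => (abs_norm_sub_norm_le _ _).trans (norm_trigPoly_sub_le hVB x y)) hN0
  refine ⟨hper.iSup_le_sSup_image_Ico hcont hN0,
    le_one_sub_rpow_neg_half_mul ?_ hB0 (hsample.trans ?_)⟩
  · rwa [div_lt_one (by positivity)]
  · have hK' : (1 : ℝ) ≤ K := by exact_mod_cast hK
    calc _ = _ + B * (2 * π * M * 1 / N) / 2 := by ring
      _ ≤ _ := by gcongr

/-- dual-norm sandwich between grid and continuum. For
`v_k(f) = Σ_{i=0}^{M−1} c^{(k)}_i·exp(2πi·f·i)` and `S(f) = sqrt(Σ_k |v_k(f)|²)`, if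
`N > 2πMK` then
`max_{j < N} S(j/N) ≤ sup_{f ∈ [0,1)} S(f) ≤ (1 − 2πMK/N)^{−1/2}·max_{j < N} S(j/N)`. -/
theorem stmt_13 (M K : ℕ) (hM : 1 ≤ M) (hK : 1 ≤ K) (c : Fin K → Fin M → ℂ)
    (v : Fin K → ℝ → ℂ)
    (hv : ∀ k (f : ℝ),
      v k f = ∑ i : Fin M, c k i * Complex.exp (2 * Real.pi * Complex.I * f * i))
    (S : ℝ → ℝ) (hS : ∀ f, S f = Real.sqrt (∑ k, ‖v k f‖ ^ 2))
    (N : ℕ) (hN : 2 * Real.pi * M * K < N) :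
    (⨆ j : Fin N, S ((j : ℝ) / N)) ≤ sSup (S '' Set.Ico (0 : ℝ) 1) ∧
    sSup (S '' Set.Ico (0 : ℝ) 1)
      ≤ (1 - 2 * Real.pi * M * K / N) ^ (-(1 : ℝ) / 2) * ⨆ j : Fin N, S ((j : ℝ) / N) :=
  stmt_13_general M K hK c v hv S hS N hN
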